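/- The expectation values E[Y − Ỹ] and E[Z − Z̃] are both bounded above by (2/p²)(1 − p²)^(N/4) and bounded below by 0. -/

import Mathlib

open MeasureTheory Filter

/-- The Bernoulli(p) measure on `Bool`: `true` has probability `p`. -/
noncomputable def bern (p : ℝ) : Measure Bool :=
  ENNReal.ofReal p • Measure.dirac true + ENNReal.ofReal (1 - p) • Measure.dirac false

/-- The law of a random subset of `{0, …, N}` where each element is included
independently with probability `p`, encoded by indicator functions. -/
noncomputable def prodBern (p : ℝ) (N : ℕ) : Measure (Fin (N + 1) → Bool) :=
  Measure.pi fun _ => bern p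

/-- `n` belongs to the sumset `A + A`, where `A ⊆ {0,…,N}` is encoded by `ω`. -/
def inSumset {N : ℕ} (ω : Fin (N + 1) → Bool) (n : ℕ) : Prop :=
  ∃ a b : Fin (N + 1), ω a = true ∧ ω b = true ∧ (a : ℕ) + (b : ℕ) = n

/-- `Y`: the number of integers in `{0,…,N}` missing from `A + A`. -/
noncomputable def Ycount (N : ℕ) (ω : Fin (N + 1) → Bool) : ℕ :=
  {n : ℕ | n ≤ N ∧ ¬ inSumset ω n}.ncard

/-- `Z`: the number of integers in `{N+1,…,2N}` missing from `A + A`. -/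
noncomputable def Zcount (N : ℕ) (ω : Fin (N + 1) → Bool) : ℕ :=
  {n : ℕ | N + 1 ≤ n ∧ n ≤ 2 * N ∧ ¬ inSumset ω n}.ncard

/-- `W`: the number of integers in `{0,…,2N}` missing from `A + A`. -/
noncomputable def Wcount (N : ℕ) (ω : Fin (N + 1) → Bool) : ℕ :=
  {n : ℕ | n ≤ 2 * N ∧ ¬ inSumset ω n}.ncard

/-- `Ỹ`: the number of integers in `{0,…,⌊N/2⌋}` missing from `A + A`. -/
noncomputable def Ytilde (N : ℕ) (ω : Fin (N + 1) → Bool) : ℕ :=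
  {n : ℕ | n ≤ N / 2 ∧ ¬ inSumset ω n}.ncard

/-- `Z̃`: the number of integers in `{⌊3N/2⌋+1,…,2N}` missing from `A + A`. -/
noncomputable def Ztilde (N : ℕ) (ω : Fin (N + 1) → Bool) : ℕ :=
  {n : ℕ | 3 * N / 2 + 1 ≤ n ∧ n ≤ 2 * N ∧ ¬ inSumset ω n}.ncard

/-- A string of `k` bits has no two consecutive ones. -/
def noTwoOnes {k : ℕ} (x : Fin k → Bool) : Prop :=
  ∀ i : ℕ, ∀ hi : i + 1 < k, ¬(x ⟨i, Nat.lt_of_succ_lt hi⟩ = true ∧ x ⟨i + 1, hi⟩ = true)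

/-- `a_k`: the probability that `k` i.i.d. Bernoulli(p) bits contain no two
consecutive 1's (with `a_0 = 1`). -/
noncomputable def aseq (p : ℝ) (k : ℕ) : ℝ :=
  ((Measure.pi fun _ : Fin k => bern p) {x | noTwoOnes x}).toReal

/-! For `n ≤ 2N` the pairs `{a, n - a}` with `n - N ≤ a < n / 2` are pairwise disjoint, so the
events "`a` and `n - a` are not both in `A`" are independent, each of probability `1 - p²`. Hence
`P(n ∉ A + A) ≤ (1 - p²)^c` where `2c ≥ min n (2N - n)`. The expectations `E[Y - Ỹ]` and
`E[Z - Z̃]` are sums of these probabilities over `N/2 < n ≤ N` and `N < n ≤ 3N/2`, where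
`min n (2N - n) ≥ N/2`, so both are dominated by the tail of a geometric series of ratio
`√(1 - p²)` from exponent `N/2`, which is at most `(2/p²)(1 - p²)^(N/4)`. -/

section Blocks

variable {ι : Type*} [Fintype ι] {Ω : ι → Type*} [∀ i, MeasurableSpace (Ω i)]
  [∀ i, MeasurableSingletonClass (Ω i)] [∀ i, Countable (Ω i)]
  (μ : ∀ i, Measure (Ω i)) [∀ i, IsProbabilityMeasure (μ i)]

lemma measure_pi_inter_of_dependsOn {s t : Set (∀ i, Ω i)} {S T : Finset ι}
    (hST : Disjoint S T) (hs : DependsOn (· ∈ s) (S : Set ι)) (ht : DependsOn (· ∈ t) (T : Set ι)) :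
    Measure.pi μ (s ∩ t) = Measure.pi μ s * Measure.pi μ t := by
  obtain ⟨f, hf⟩ := dependsOn_iff_exists_comp.1 hs
  obtain ⟨g, hg⟩ := dependsOn_iff_exists_comp.1 ht
  have hs' : s = (fun ω (i : S) => ω i) ⁻¹' {x | f x} := Set.ext fun ω => Iff.of_eq (congrFun hf ω)
  have ht' : t = (fun ω (i : T) => ω i) ⁻¹' {x | g x} := Set.ext fun ω => Iff.of_eq (congrFun hg ω)
  rw [hs', ht']
  have hindep := (ProbabilityTheory.iIndepFun_pi (μ := μ) (X := fun i (x : Ω i) => x)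
    fun _ => aemeasurable_id).indepFun_finset S T hST measurable_pi_apply
  exact hindep.measure_inter_preimage_eq_mul _ _
    (Set.to_countable _).measurableSet (Set.to_countable _).measurableSet

lemma measure_pi_biInter_of_dependsOn {κ : Type*} (J : Finset κ) (B : κ → Finset ι)
    (hB : (J : Set κ).PairwiseDisjoint B) (E : κ → Set (∀ i, Ω i))
    (hE : ∀ j ∈ J, DependsOn (· ∈ E j) (B j : Set ι)) :
    Measure.pi μ (⋂ j ∈ J, E j) = ∏ j ∈ J, Measure.pi μ (E j) := by
  classical
  induction J using Finset.induction_on with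
  | empty => simp
  | insert j J hj ih =>
    have hrest : DependsOn (· ∈ ⋂ k ∈ J, E k) (J.biUnion B : Set ι) := by
      intro x y hxy
      simp only [Set.mem_iInter, eq_iff_iff]
      exact forall₂_congr fun k hk => Iff.of_eq <| hE k (Finset.mem_insert_of_mem hk) fun i hi =>
        hxy i (Finset.mem_biUnion.2 ⟨k, hk, hi⟩)
    have hdisj : Disjoint (B j) (J.biUnion B) := (Finset.disjoint_biUnion_right _ _ _).2 fun k hk =>
      hB (by simp) (by simp [hk]) (by rintro rfl; exact hj hk)
    rw [Finset.set_biInter_insert, Finset.prod_insert hj,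
      measure_pi_inter_of_dependsOn μ hdisj (hE j (Finset.mem_insert_self j J)) hrest,
      ih (hB.subset (by simp)) fun k hk => hE k (Finset.mem_insert_of_mem hk)]

end Blocks

lemma bern_true (p : ℝ) : bern p {true} = ENNReal.ofReal p := by
  simp [bern]

lemma isProbabilityMeasure_bern {p : ℝ} (hp0 : 0 ≤ p) (hp1 : p ≤ 1) :
    IsProbabilityMeasure (bern p) :=
  ⟨by simp [bern, ← ENNReal.ofReal_add hp0 (sub_nonneg.2 hp1)]⟩

lemma measureReal_pi_bern_not_both {ι : Type*} [Fintype ι] {p : ℝ} (hp0 : 0 ≤ p) (hp1 : p ≤ 1)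
    {i j : ι} (hij : i ≠ j) :
    (Measure.pi fun _ : ι => bern p).real {ω | ¬(ω i = true ∧ ω j = true)} = 1 - p ^ 2 := by
  have := isProbabilityMeasure_bern hp0 hp1
  have hcoord (k : ι) : Measure.pi (fun _ : ι => bern p) {ω | ω k ∈ ({true} : Set Bool)} =
      ENNReal.ofReal p :=
    ((measurePreserving_eval _ k).measure_preimage
      (measurableSet_singleton _).nullMeasurableSet).trans (bern_true p)
  have hboth : Measure.pi (fun _ : ι => bern p) ({ω | ω i ∈ ({true} : Set Bool)} ∩
      {ω | ω j ∈ ({true} : Set Bool)}) = ENNReal.ofReal p * ENNReal.ofReal p := by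
    rw [measure_pi_inter_of_dependsOn _ (S := {i}) (T := {j}) (by simpa using hij)
      (fun x y h => by simp [h i (by simp)]) (fun x y h => by simp [h j (by simp)]),
      hcoord, hcoord]
  have hset : {ω : ι → Bool | ¬(ω i = true ∧ ω j = true)} =
      ({ω | ω i ∈ ({true} : Set Bool)} ∩ {ω | ω j ∈ ({true} : Set Bool)})ᶜ := by
    ext ω; simp
  rw [hset, probReal_compl_eq_one_sub (Set.to_countable _).measurableSet, measureReal_def, hboth,
    ENNReal.toReal_mul, ENNReal.toReal_ofReal hp0, sq]

lemma measureReal_pi_bern_forall_not_both {ι κ : Type*} [Fintype ι] [DecidableEq ι] {p : ℝ}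
    (hp0 : 0 ≤ p) (hp1 : p ≤ 1) (J : Finset κ) (a b : κ → ι) (hab : ∀ j ∈ J, a j ≠ b j)
    (hdisj : (J : Set κ).PairwiseDisjoint fun j => ({a j, b j} : Finset ι)) :
    (Measure.pi fun _ : ι => bern p).real (⋂ j ∈ J, {ω | ¬(ω (a j) = true ∧ ω (b j) = true)}) =
      (1 - p ^ 2) ^ J.card := by
  have := isProbabilityMeasure_bern hp0 hp1
  have hdep : ∀ j ∈ J, DependsOn (· ∈ {ω : ι → Bool | ¬(ω (a j) = true ∧ ω (b j) = true)})
      (({a j, b j} : Finset ι) : Set ι) := fun j _ x y h => by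
    simp only [Set.mem_ofPred_eq]
    rw [h (a j) (by simp), h (b j) (by simp)]
  rw [measureReal_def, measure_pi_biInter_of_dependsOn _ J _ hdisj _ hdep, ENNReal.toReal_prod,
    ← Finset.prod_const]
  exact Finset.prod_congr rfl fun j hj => measureReal_pi_bern_not_both hp0 hp1 (hab j hj)

lemma isProbabilityMeasure_prodBern {p : ℝ} (hp0 : 0 ≤ p) (hp1 : p ≤ 1) (N : ℕ) :
    IsProbabilityMeasure (prodBern p N) := by
  have := isProbabilityMeasure_bern hp0 hp1
  unfold prodBern
  infer_instance

lemma prodBern_real_notInSumset_le {p : ℝ} (hp0 : 0 ≤ p) (hp1 : p ≤ 1) (N n : ℕ) :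
    (prodBern p N).real {ω | ¬ inSumset ω n} ≤ (1 - p ^ 2) ^ ((n + 1) / 2 - (n - N)) := by
  have := isProbabilityMeasure_prodBern hp0 hp1 N
  set J := Finset.Ico (n - N) ((n + 1) / 2)
  let a : ℕ → Fin (N + 1) := Fin.ofNat (N + 1)
  let b (k : ℕ) : Fin (N + 1) := Fin.ofNat (N + 1) (n - k)
  have hval : ∀ k ∈ J, (a k : ℕ) = k ∧ (b k : ℕ) = n - k ∧ n - N ≤ k ∧ 2 * k < n := by
    intro k hk
    rw [Finset.mem_Ico] at hk
    simp only [a, b, Fin.val_ofNat]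
    refine ⟨Nat.mod_eq_of_lt ?_, Nat.mod_eq_of_lt ?_, ?_, ?_⟩ <;> omega
  have hsub : {ω | ¬ inSumset ω n} ⊆ ⋂ k ∈ J, {ω | ¬(ω (a k) = true ∧ ω (b k) = true)} := by
    intro ω hω
    simp only [Set.mem_iInter]
    rintro k hk ⟨ha, hb⟩
    obtain ⟨hak, hbk, -, hkn⟩ := hval k hk
    exact hω ⟨_, _, ha, hb, by omega⟩
  have hdisj : (J : Set ℕ).PairwiseDisjoint fun k => ({a k, b k} : Finset (Fin (N + 1))) := by
    intro k hk l hl hkl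
    obtain ⟨hak, hbk, hk₁, hk₂⟩ := hval k hk
    obtain ⟨hal, hbl, hl₁, hl₂⟩ := hval l hl
    simp only [Function.onFun, Finset.disjoint_insert_left, Finset.disjoint_singleton_left,
      Finset.mem_insert, Finset.mem_singleton, Fin.ext_iff]
    omega
  calc (prodBern p N).real {ω | ¬ inSumset ω n}
      ≤ (prodBern p N).real (⋂ k ∈ J, {ω | ¬(ω (a k) = true ∧ ω (b k) = true)}) :=
        measureReal_mono hsub (measure_ne_top _ _)
    _ = (1 - p ^ 2) ^ ((n + 1) / 2 - (n - N)) := by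
      rw [prodBern, measureReal_pi_bern_forall_not_both hp0 hp1 J a b (fun k hk => by
        obtain ⟨hak, hbk, -, hkn⟩ := hval k hk
        rw [Ne, Fin.ext_iff]
        omega) hdisj, Nat.card_Ico]

lemma sum_sqrt_pow_le {q : ℝ} (hq0 : 0 < q) (hq1 : q < 1) (N : ℕ) (s : Finset ℕ) {φ : ℕ → ℕ}
    (hφ : Set.InjOn φ s) (hN : ∀ n ∈ s, N ≤ 2 * φ n) :
    ∑ n ∈ s, √q ^ φ n ≤ 2 / (1 - q) * q ^ ((N : ℝ) / 4) := by
  set r := √q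
  have hr0 : 0 ≤ r := Real.sqrt_nonneg q
  have hr1 : r < 1 := by simpa using Real.sqrt_lt_sqrt hq0.le hq1
  have hrq : (1 - r) * (1 + r) = 1 - q := by
    rw [← Real.sq_sqrt hq0.le]
    ring
  set k₀ := (N + 1) / 2
  have hsub : s.image φ ⊆ Finset.Ico k₀ ((s.image φ).sup id + 1) := fun k hk => by
    have hle : k ≤ (s.image φ).sup id := Finset.le_sup (f := id) hk
    obtain ⟨n, hn, rfl⟩ := Finset.mem_image.1 hk
    have := hN n hn
    rw [Finset.mem_Ico]
    omega
  have hpow : r ^ k₀ ≤ q ^ ((N : ℝ) / 4) := by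
    rw [show r = q ^ (1 / 2 : ℝ) from Real.sqrt_eq_rpow q, ← Real.rpow_natCast,
      ← Real.rpow_mul hq0.le]
    refine Real.rpow_le_rpow_of_exponent_ge hq0 hq1.le ?_
    have : (N : ℝ) ≤ 2 * k₀ := by exact_mod_cast (by omega : N ≤ 2 * k₀)
    linarith
  calc ∑ n ∈ s, r ^ φ n = ∑ k ∈ s.image φ, r ^ k := (Finset.sum_image hφ).symm
    _ ≤ ∑ k ∈ Finset.Ico k₀ ((s.image φ).sup id + 1), r ^ k :=
      Finset.sum_le_sum_of_subset_of_nonneg hsub fun _ _ _ => pow_nonneg hr0 _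
    _ ≤ r ^ k₀ / (1 - r) := geom_sum_Ico_le_of_lt_one hr0 hr1
    _ = (1 + r) / (1 - q) * r ^ k₀ := by
      rw [← hrq]
      field_simp [(by linarith : (1 + r) ≠ 0)]
    _ ≤ 2 / (1 - q) * q ^ ((N : ℝ) / 4) := by
      gcongr
      linarith

lemma sum_prodBern_real_notInSumset_le {p : ℝ} (hp0 : 0 < p) (hp1 : p < 1) (N : ℕ)
    (s : Finset ℕ) {φ : ℕ → ℕ} (hφ : Set.InjOn φ s) (hN : ∀ n ∈ s, N ≤ 2 * φ n)
    (hφle : ∀ n ∈ s, φ n ≤ n ∧ φ n + n ≤ 2 * N) :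
    ∑ n ∈ s, (prodBern p N).real {ω | ¬ inSumset ω n} ≤
      2 / p ^ 2 * (1 - p ^ 2) ^ ((N : ℝ) / 4) := by
  have hq0 : 0 < 1 - p ^ 2 := by nlinarith
  calc ∑ n ∈ s, (prodBern p N).real {ω | ¬ inSumset ω n}
      ≤ ∑ n ∈ s, √(1 - p ^ 2) ^ φ n := Finset.sum_le_sum fun n hn => by
        refine (prodBern_real_notInSumset_le hp0.le hp1.le N n).trans ?_
        rw [← Real.sq_sqrt hq0.le, ← pow_mul, Real.sq_sqrt hq0.le]
        have := hφle n hn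
        exact pow_le_pow_of_le_one (Real.sqrt_nonneg _)
          (Real.sqrt_le_one.2 (sub_le_self _ (sq_nonneg p))) (by omega)
    _ ≤ 2 / (1 - (1 - p ^ 2)) * (1 - p ^ 2) ^ ((N : ℝ) / 4) :=
      sum_sqrt_pow_le hq0 (by nlinarith) N s hφ hN
    _ = 2 / p ^ 2 * (1 - p ^ 2) ^ ((N : ℝ) / 4) := by ring_nf

lemma integral_ncard_sub_ncard {p : ℝ} (hp0 : 0 ≤ p) (hp1 : p ≤ 1) (N : ℕ) {s t : Finset ℕ}
    (hst : s ⊆ t) :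
    ∫ ω, (({n | n ∈ t ∧ ¬ inSumset ω n}.ncard : ℝ) - {n | n ∈ s ∧ ¬ inSumset ω n}.ncard)
      ∂prodBern p N = ∑ n ∈ t \ s, (prodBern p N).real {ω | ¬ inSumset ω n} := by
  classical
  have := isProbabilityMeasure_prodBern hp0 hp1 N
  have hcount (u : Finset ℕ) (ω : Fin (N + 1) → Bool) :
      ({n | n ∈ u ∧ ¬ inSumset ω n}.ncard : ℝ) =
        ∑ n ∈ u, {ω | ¬ inSumset ω n}.indicator 1 ω := by
    simp only [← Finset.coe_filter, Set.ncard_coe_finset, Set.indicator_apply, Set.mem_ofPred_eq,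
      Pi.one_apply, Finset.sum_boole]
  simp_rw [hcount, ← Finset.sum_sdiff hst, add_sub_cancel_right]
  rw [integral_finsetSum _ fun _ _ => Integrable.of_finite]
  exact Finset.sum_congr rfl fun n _ => integral_indicator_one (Set.to_countable _).measurableSet

/-- The expectations `E[Y - Ỹ]` and `E[Z - Z̃]` are bounded above by
`(2/p²)(1-p²)^(N/4)` and below by `0`. -/
theorem stmt3 (p : ℝ) (hp0 : 0 < p) (hp1 : p < 1) (N : ℕ) :
    (0 ≤ (∫ ω, ((Ycount N ω : ℝ) - (Ytilde N ω : ℝ)) ∂ prodBern p N) ∧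
      (∫ ω, ((Ycount N ω : ℝ) - (Ytilde N ω : ℝ)) ∂ prodBern p N) ≤
        2 / p ^ 2 * (1 - p ^ 2) ^ ((N : ℝ) / 4)) ∧
    (0 ≤ (∫ ω, ((Zcount N ω : ℝ) - (Ztilde N ω : ℝ)) ∂ prodBern p N) ∧
      (∫ ω, ((Zcount N ω : ℝ) - (Ztilde N ω : ℝ)) ∂ prodBern p N) ≤
        2 / p ^ 2 * (1 - p ^ 2) ^ ((N : ℝ) / 4)) := by
  have hY := integral_ncard_sub_ncard hp0.le hp1.le N
    (Finset.Iic_subset_Iic.2 (Nat.div_le_self N 2))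
  have hZ := integral_ncard_sub_ncard hp0.le hp1.le N (s := Finset.Icc (3 * N / 2 + 1) (2 * N))
    (t := Finset.Icc (N + 1) (2 * N)) (Finset.Icc_subset_Icc_left (by omega))
  simp only [Finset.mem_Iic, Finset.mem_Icc, and_assoc] at hY hZ
  simp only [Ycount, Ytilde, Zcount, Ztilde, hY, hZ]
  refine ⟨⟨Finset.sum_nonneg fun _ _ => measureReal_nonneg, ?_⟩,
    Finset.sum_nonneg fun _ _ => measureReal_nonneg, ?_⟩
  · refine sum_prodBern_real_notInSumset_le hp0 hp1 N _ (φ := id) (Set.injOn_id _) ?_ ?_ <;>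
    · intro n hn
      simp only [Finset.mem_sdiff, Finset.mem_Iic, id] at hn ⊢
      omega
  · refine sum_prodBern_real_notInSumset_le hp0 hp1 N _ (φ := (2 * N - ·))
      (fun m hm n hn h => ?_) (fun n hn => ?_) (fun n hn => ?_) <;>
    simp only [Finset.mem_coe, Finset.mem_sdiff, Finset.mem_Icc] at * <;>
    omega
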